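/- If g ∈ A₁, then the Fourier transform ĝ belongs to L¹(ℝ). -/

import Mathlib

/-!
Since `g ≥ 0`, its Fourier transform is positive definite: by the multiplication formula
`∫ ĝ · G = ∫ g · Ĝ`, pairing `ĝ` with a Gaussian `G(α) = e^{-πεα²}` (whose transform is again a
positive Gaussian) gives a nonnegative number. Because `ĝ ≤ 0` for `|α| ≥ 1` and `|ĝ| ≤ ‖g‖₁`,
this bounds `∫ |ĝ| G` by `4‖g‖₁` uniformly in `ε`, and Fatou's lemma as `ε → 0` gives `ĝ ∈ L¹`.
Evenness of `g` makes `ĝ` real-valued, so integrability of `Re ĝ` is integrability of `ĝ`.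
-/

open MeasureTheory Filter
open scoped Classical

noncomputable section

/-- The Fourier transform `ĝ(α) = ∫ g(x) e^{-2πiαx} dx` of a real-valued function. -/
def fourierT (g : ℝ → ℝ) (α : ℝ) : ℂ :=
  ∫ x : ℝ, (g x : ℂ) * Complex.exp (-(2 * Real.pi * α * x : ℝ) * Complex.I)

/-- The class `A₁` of continuous, even, non-negative functions `g ∈ L¹(ℝ)`
with `ĝ(α) ≤ 0` for `|α| ≥ 1` (such `ĝ` is real-valued since `g` is even and real). -/
def memA1 (g : ℝ → ℝ) : Prop :=
  Continuous g ∧ (∀ x, g (-x) = g x) ∧ (∀ x, 0 ≤ g x) ∧ MeasureTheory.Integrable g ∧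
    ∀ α : ℝ, 1 ≤ |α| → (fourierT g α).re ≤ 0

/-- The functional `ρ₁(g) = ĝ(0) + ∫_{-1}^{1} ĝ(α)|α| dα`. -/
def rho1 (g : ℝ → ℝ) : ℝ :=
  (fourierT g 0).re + ∫ α in (-1 : ℝ)..1, (fourierT g α).re * |α|

/-- The constant `C₁ = inf ρ₁(g)/g(0)` over nonzero `g ∈ A₁` with `g(0) > 0`. -/
def C1 : ℝ :=
  sInf {c : ℝ | ∃ g : ℝ → ℝ, memA1 g ∧ g ≠ 0 ∧ 0 < g 0 ∧ c = rho1 g / g 0}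

open scoped FourierTransform ComplexConjugate Topology ENNReal
open Real

theorem integrable_of_forall_integral_mul_nonneg {X : Type*} [MeasurableSpace X] {μ : Measure X}
    {φ : X → ℝ} {M : ℝ} {s : Set X} {w : ℕ → X → ℝ} (hφ : AEStronglyMeasurable φ μ)
    (hφM : ∀ x, |φ x| ≤ M) (hs : MeasurableSet s) (hμs : μ s ≠ ∞) (hφs : ∀ x ∉ s, φ x ≤ 0)
    (hw : ∀ n, Integrable (w n) μ) (hw0 : ∀ n x, 0 ≤ w n x) (hw1 : ∀ n x, w n x ≤ 1)
    (hlim : ∀ x, Tendsto (fun n ↦ w n x) atTop (𝓝 1))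
    (hpos : ∀ n, 0 ≤ ∫ x, φ x * w n x ∂μ) : Integrable φ μ := by
  have hφw n : Integrable (fun x ↦ φ x * w n x) μ :=
    (hw n).bdd_mul hφ (ae_of_all _ fun x ↦ (Real.norm_eq_abs _).trans_le (hφM x))
  have habs n : Integrable (fun x ↦ |φ x| * w n x) μ :=
    (hw n).bdd_mul hφ.norm (ae_of_all _ fun x ↦ by simpa using hφM x)
  -- `|φ| ≤ -φ` off `s`, while `|φ| + φ ≤ 2M` everywhere
  have hpointwise n x : |φ x| * w n x ≤ -(φ x * w n x) + s.indicator (fun _ ↦ 2 * M) x := by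
    by_cases hx : x ∈ s
    · rw [Set.indicator_of_mem hx]
      have := hw1 n x
      nlinarith [hw0 n x, neg_abs_le (φ x), le_abs_self (φ x), hφM x]
    · rw [Set.indicator_of_notMem hx, abs_of_nonpos (hφs x hx)]
      linarith
  have hind : Integrable (s.indicator fun _ ↦ 2 * M) μ :=
    (integrableOn_const hμs).integrable_indicator hs
  have hbound n : ∫ x, |φ x| * w n x ∂μ ≤ 2 * M * μ.real s := calc
    _ ≤ ∫ x, -(φ x * w n x) + s.indicator (fun _ ↦ 2 * M) x ∂μ :=
      integral_mono (habs n) ((hφw n).neg.add hind) (hpointwise n)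
    _ = -∫ x, φ x * w n x ∂μ + 2 * M * μ.real s := by
      rw [integral_add (f := fun x ↦ -(φ x * w n x)) (hφw n).neg hind, integral_neg,
        integral_indicator_const _ hs, smul_eq_mul, mul_comm]
    _ ≤ 2 * M * μ.real s := by linarith [hpos n]
  have hlintegral n :
      ∫⁻ x, ENNReal.ofReal (|φ x| * w n x) ∂μ ≤ ENNReal.ofReal (2 * M * μ.real s) := by
    rw [← ofReal_integral_eq_lintegral_ofReal (habs n)
      (ae_of_all _ fun x ↦ mul_nonneg (abs_nonneg _) (hw0 n x))]
    exact ENNReal.ofReal_le_ofReal (hbound n)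
  refine ⟨hφ, ?_⟩
  calc ∫⁻ x, ‖φ x‖ₑ ∂μ
      = ∫⁻ x, liminf (fun n ↦ ENNReal.ofReal (|φ x| * w n x)) atTop ∂μ := by
        refine lintegral_congr fun x ↦ ?_
        have hx : Tendsto (fun n ↦ |φ x| * w n x) atTop (𝓝 |φ x|) := by
          simpa using (hlim x).const_mul |φ x|
        rw [Real.enorm_eq_ofReal_abs, (ENNReal.tendsto_ofReal hx).liminf_eq]
    _ ≤ liminf (fun n ↦ ∫⁻ x, ENNReal.ofReal (|φ x| * w n x) ∂μ) atTop :=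
        lintegral_liminf_le' fun n ↦ (habs n).aemeasurable.ennreal_ofReal
    _ ≤ ENNReal.ofReal (2 * M * μ.real s) :=
        liminf_le_of_frequently_le' (Frequently.of_forall hlintegral)
    _ < ∞ := ENNReal.ofReal_lt_top

section Fourier

variable {V : Type*} [NormedAddCommGroup V] [InnerProductSpace ℝ V] [MeasurableSpace V]
  [BorelSpace V] [FiniteDimensional ℝ V]

theorem Real.conj_fourier (f : V → ℂ) (w : V) : conj (𝓕 f w) = 𝓕⁻ (fun x ↦ conj (f x)) w := by
  rw [fourier_eq, fourierInv_eq, ← integral_conj]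
  congr 1 with v
  simp [Circle.smul_def, ← Circle.coe_inv_eq_conj, ← AddChar.map_neg_eq_inv]

theorem Real.integral_fourier_mul_eq {f g : V → ℂ} (hf : Integrable f) (hg : Integrable g) :
    ∫ ξ, 𝓕 f ξ * g ξ = ∫ x, f x * 𝓕 g x := by
  simpa using! VectorFourier.integral_fourierIntegral_smul_eq_flip (L := innerₗ V)
      Real.continuous_fourierChar continuous_inner hf hg

theorem Real.norm_fourier_le_integral_norm (f : V → ℂ) (w : V) : ‖𝓕 f w‖ ≤ ∫ v, ‖f v‖ :=
  VectorFourier.norm_fourierIntegral_le_integral_norm _ _ _ _ _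

theorem Real.continuous_fourier_of_integrable {f : V → ℂ} (hf : Integrable f) :
    Continuous (𝓕 f) :=
  VectorFourier.fourierIntegral_continuous Real.continuous_fourierChar continuous_inner hf

theorem Real.fourier_ofReal_eq_re_of_even {g : V → ℝ} (heven : ∀ x, g (-x) = g x) (w : V) :
    ((𝓕 (fun x ↦ (g x : ℂ)) w).re : ℂ) = 𝓕 (fun x ↦ (g x : ℂ)) w := by
  rw [← Complex.conj_eq_iff_re, conj_fourier]
  simp only [Complex.conj_ofReal]
  rw [fourierInv_eq_fourier_comp_neg]
  simp only [heven]

end Fourier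

theorem Real.integrable_exp_neg_pi_mul_sq {b : ℝ} (hb : 0 < b) :
    Integrable fun ξ : ℝ ↦ rexp (-π * b * ξ ^ 2) := by
  simpa [neg_mul] using integrable_exp_neg_mul_sq (mul_pos pi_pos hb)

theorem Real.fourier_gaussian_pi_ofReal {b : ℝ} (hb : 0 < b) (t : ℝ) :
    𝓕 (fun x : ℝ ↦ (rexp (-π * b * x ^ 2) : ℂ)) t = ((rexp (-π / b * t ^ 2) / √b : ℝ) : ℂ) := by
  have h := congrFun (fourier_gaussian_pi (b := (b : ℂ)) (by simpa)) t
  have hsqrt : (b : ℂ) ^ (1 / 2 : ℂ) = (√b : ℂ) := by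
    rw [Real.sqrt_eq_rpow, Complex.ofReal_cpow hb.le]; norm_num
  push_cast at h ⊢
  rw [h, hsqrt]
  ring

theorem Real.integral_re_fourier_mul_gaussian_nonneg {g : ℝ → ℝ} (hg : Integrable g)
    (hpos : ∀ x, 0 ≤ g x) {b : ℝ} (hb : 0 < b) :
    0 ≤ ∫ ξ, (𝓕 (fun x ↦ (g x : ℂ)) ξ).re * rexp (-π * b * ξ ^ 2) := by
  have hW : Integrable fun ξ : ℝ ↦ (rexp (-π * b * ξ ^ 2) : ℂ) :=
    (integrable_exp_neg_pi_mul_sq hb).ofReal (𝕜 := ℂ)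
  have hFW : Integrable fun ξ ↦ 𝓕 (fun x ↦ (g x : ℂ)) ξ * rexp (-π * b * ξ ^ 2) :=
    hW.bdd_mul (f := 𝓕 fun x ↦ (g x : ℂ))
      (continuous_fourier_of_integrable hg.ofReal).aestronglyMeasurable
      (ae_of_all _ (norm_fourier_le_integral_norm _))
  calc 0 ≤ ∫ x, g x * (rexp (-π / b * x ^ 2) / √b) :=
        integral_nonneg fun x ↦ mul_nonneg (hpos x) (by positivity)
    _ = (∫ x, (g x : ℂ) * 𝓕 (fun ξ : ℝ ↦ (rexp (-π * b * ξ ^ 2) : ℂ)) x).re := by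
        simp_rw [fourier_gaussian_pi_ofReal hb, ← Complex.ofReal_mul, integral_complex_ofReal,
          Complex.ofReal_re]
    _ = (∫ ξ, 𝓕 (fun x ↦ (g x : ℂ)) ξ * rexp (-π * b * ξ ^ 2)).re :=
        congrArg Complex.re (integral_fourier_mul_eq hg.ofReal hW).symm
    _ = ∫ ξ, (𝓕 (fun x ↦ (g x : ℂ)) ξ).re * rexp (-π * b * ξ ^ 2) := by
        simp_rw [← RCLike.re_to_complex, ← integral_re hFW, RCLike.re_to_complex,
          Complex.re_mul_ofReal]

theorem fourierT_eq_fourier (g : ℝ → ℝ) : fourierT g = 𝓕 (fun x ↦ (g x : ℂ)) := by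
  ext α
  rw [Real.fourier_real_eq_integral_exp_smul, fourierT]
  congr 1 with x
  rw [smul_eq_mul, mul_comm]
  push_cast
  ring_nf

theorem Real.exp_neg_pi_mul_sq_le_one {b : ℝ} (hb : 0 ≤ b) (ξ : ℝ) :
    rexp (-π * b * ξ ^ 2) ≤ 1 := by
  rw [exp_le_one_iff, neg_mul, neg_mul, neg_nonpos]
  positivity

theorem tendsto_exp_neg_pi_div_succ_mul_sq (ξ : ℝ) :
    Tendsto (fun n : ℕ ↦ rexp (-π * (1 / (n + 1)) * ξ ^ 2)) atTop (𝓝 1) := by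
  simpa using ((tendsto_one_div_add_atTop_nhds_zero_nat.const_mul (-π)).mul_const (ξ ^ 2)).rexp

/-- If `g ∈ A₁`, then the Fourier transform `ĝ` belongs to `L¹(ℝ)`. -/
theorem statement10 (g : ℝ → ℝ) (hg : memA1 g) : Integrable (fourierT g) := by
  obtain ⟨-, heven, hpos, hint, hneg⟩ := hg
  rw [fourierT_eq_fourier] at hneg ⊢
  set F := 𝓕 fun x ↦ (g x : ℂ)
  have hF_cont : Continuous F := continuous_fourier_of_integrable hint.ofReal
  have hF_bound ξ : |(F ξ).re| ≤ ∫ x, ‖(g x : ℂ)‖ :=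
    (Complex.abs_re_le_norm _).trans (norm_fourier_le_integral_norm _ ξ)
  have hF_nonpos : ∀ ξ ∉ Set.Ioo (-1 : ℝ) 1, (F ξ).re ≤ 0 := fun ξ hξ ↦
    hneg ξ (not_lt.1 fun h ↦ hξ (abs_lt.1 h))
  have hF_re : Integrable fun ξ ↦ (F ξ).re :=
    integrable_of_forall_integral_mul_nonneg
      (Complex.continuous_re.comp hF_cont).aestronglyMeasurable
      hF_bound measurableSet_Ioo measure_Ioo_lt_top.ne hF_nonpos
      (fun n ↦ integrable_exp_neg_pi_mul_sq (by positivity)) (fun n ξ ↦ (exp_pos _).le)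
      (fun n ↦ exp_neg_pi_mul_sq_le_one (by positivity)) tendsto_exp_neg_pi_div_succ_mul_sq
      (fun n ↦ integral_re_fourier_mul_gaussian_nonneg hint hpos (by positivity))
  have hF_real : (fun ξ ↦ ((F ξ).re : ℂ)) = F := funext (fourier_ofReal_eq_re_of_even heven)
  exact hF_real ▸ hF_re.ofReal

end
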